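/- arXiv:1901.02907 — 4 statements merged into one kernel-verified Lean document; each statement's English description precedes it below -/
import Mathlib

section
/- Let A be the 2×2 real matrix with rows (−1, 1) and (1, −1), let l : [0, ∞) → ℝ be continuous with l(t) ≥ l₀ for all t ≥ 0, where l₀ > 0, and let g : [0, ∞) → ℝ² be differentiable with g′(t) = l(t)·(A g(t)) for all t ≥ 0. Then g₁(t) + g₂(t) = g₁(0) + g₂(0) for all t ≥ 0, and if moreover g₁(0) + g₂(0) = 1, then ‖g(t) − (1/2, 1/2)‖ ≤ e^{−2 l₀ t} ‖g(0) − (1/2, 1/2)‖ for all t ≥ 0; in particular g(t) → (1/2, 1/2) as t → ∞. -/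
/-!
The matrix `A` kills `(1, 1)ᵀ` and is symmetric, so `g₁ + g₂` is a first integral. On the line
`g₁ + g₂ = 1` the vector field becomes `g' = -2 l (g - c)` with `c = (1/2, 1/2)`, hence
`(‖g - c‖²)' = -4 l ‖g - c‖² ≤ -4 l₀ ‖g - c‖²`, and `‖g - c‖² e^{4 l₀ t}` is antitone.
-/

open Set Filter Real Topology

theorem HasDerivWithinAt.euclideanSpace_apply {ι : Type*} [Fintype ι]
    {f : ℝ → EuclideanSpace ℝ ι} {f' : EuclideanSpace ℝ ι} {s : Set ℝ} {x : ℝ}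
    (hf : HasDerivWithinAt f f' s x) (i : ι) :
    HasDerivWithinAt (fun t => f t i) (f' i) s x := by
  exact (EuclideanSpace.proj (𝕜 := ℝ) i).hasFDerivAt.comp_hasDerivWithinAt x hf

theorem eq_of_hasDerivWithinAt_Ici_zero {E : Type*} [NormedAddCommGroup E] [NormedSpace ℝ E]
    {f : ℝ → E} (hf : ∀ t ≥ 0, HasDerivWithinAt f 0 (Ici 0) t) {t : ℝ} (ht : 0 ≤ t) :
    f t = f 0 :=
  constant_of_has_deriv_right_zero
    (fun x hx => (hf x hx.1).continuousWithinAt.mono Icc_subset_Ici_self)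
    (fun x hx => (hf x hx.1).mono (Ici_subset_Ici.2 hx.1)) t ⟨ht, le_rfl⟩

theorem le_exp_mul_of_hasDerivWithinAt_le_mul {f f' : ℝ → ℝ} {k : ℝ}
    (hf : ∀ t ≥ 0, HasDerivWithinAt f (f' t) (Ici 0) t) (hf' : ∀ t > 0, f' t ≤ k * f t)
    {t : ℝ} (ht : 0 ≤ t) : f t ≤ exp (k * t) * f 0 := by
  have hexp (u : ℝ) : HasDerivAt (fun u => exp (-k * u)) (exp (-k * u) * -k) u := by
    simpa using ((hasDerivAt_id u).const_mul (-k)).exp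
  have hanti : AntitoneOn (fun u => exp (-k * u) * f u) (Ici 0) := by
    refine antitoneOn_of_hasDerivWithinAt_nonpos (convex_Ici 0)
      (fun u hu => ((hexp u).hasDerivWithinAt.mul (hf u hu)).continuousWithinAt)
      (f' := fun u => exp (-k * u) * -k * f u + exp (-k * u) * f' u) ?_ ?_
    · intro u hu
      rw [interior_Ici] at hu ⊢
      exact (hexp u).hasDerivWithinAt.mul ((hf u hu.le).mono Ioi_subset_Ici_self)
    · intro u hu
      rw [interior_Ici] at hu
      nlinarith [mul_le_mul_of_nonneg_left (hf' u hu) (exp_pos (-k * u)).le]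
  have hdecay := hanti self_mem_Ici (mem_Ici.2 ht) ht
  simp only [mul_zero, exp_zero, one_mul] at hdecay
  calc f t = exp (k * t) * (exp (-k * t) * f t) := by
        rw [← mul_assoc, ← exp_add, neg_mul, add_neg_cancel, exp_zero, one_mul]
    _ ≤ exp (k * t) * f 0 := by gcongr

theorem tendsto_of_norm_sub_le_exp_mul {E : Type*} [NormedAddCommGroup E] {f : ℝ → E} {a : E}
    {k C : ℝ} (hk : k < 0) (hf : ∀ t ≥ 0, ‖f t - a‖ ≤ exp (k * t) * C) :
    Tendsto f atTop (𝓝 a) := by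
  have hbound : Tendsto (fun t => exp (k * t) * C) atTop (𝓝 0) := by
    simpa using (tendsto_exp_atBot.comp (tendsto_id.const_mul_atTop_of_neg hk)).mul_const C
  exact tendsto_iff_norm_sub_tendsto_zero.2 <| squeeze_zero' (.of_forall fun _ => norm_nonneg _)
    ((eventually_ge_atTop 0).mono hf) hbound

theorem toEuclideanLin_apply_zero_add_apply_one (x : EuclideanSpace ℝ (Fin 2)) :
    Matrix.toEuclideanLin !![(-1 : ℝ), 1; 1, -1] x 0 +
      Matrix.toEuclideanLin !![(-1 : ℝ), 1; 1, -1] x 1 = 0 := by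
  simp [Matrix.mulVec, dotProduct, Fin.sum_univ_two]
  ring

theorem toEuclideanLin_eq_smul_sub_of_add_eq_one {x : EuclideanSpace ℝ (Fin 2)}
    (hx : x 0 + x 1 = 1) :
    Matrix.toEuclideanLin !![(-1 : ℝ), 1; 1, -1] x =
      (-2 : ℝ) • (x - (WithLp.equiv 2 (Fin 2 → ℝ)).symm ![(1:ℝ)/2, 1/2]) := by
  ext i
  fin_cases i <;> simp [Matrix.mulVec, dotProduct, Fin.sum_univ_two] <;> linarith

theorem stmt_2_general (l₀ : ℝ) (hl₀ : 0 < l₀) (l : ℝ → ℝ)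
    (hl : ∀ t ≥ (0 : ℝ), l₀ ≤ l t)
    (g : ℝ → EuclideanSpace ℝ (Fin 2))
    (hg : ∀ t ≥ (0 : ℝ), HasDerivWithinAt g
      (l t • Matrix.toEuclideanLin (!![(-1 : ℝ), 1; 1, -1]) (g t)) (Set.Ici 0) t) :
    (∀ t ≥ (0 : ℝ), g t 0 + g t 1 = g 0 0 + g 0 1) ∧
    (g 0 0 + g 0 1 = 1 →
      (∀ t ≥ (0 : ℝ),
          ‖g t - (WithLp.equiv 2 (Fin 2 → ℝ)).symm ![(1:ℝ)/2, 1/2]‖ ≤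
            Real.exp (-2 * l₀ * t) *
              ‖g 0 - (WithLp.equiv 2 (Fin 2 → ℝ)).symm ![(1:ℝ)/2, 1/2]‖) ∧
      Filter.Tendsto g Filter.atTop
        (nhds ((WithLp.equiv 2 (Fin 2 → ℝ)).symm ![(1:ℝ)/2, 1/2]))) := by
  have hsum (t : ℝ) (ht : 0 ≤ t) : g t 0 + g t 1 = g 0 0 + g 0 1 :=
    eq_of_hasDerivWithinAt_Ici_zero (f := fun u => g u 0 + g u 1) (fun u hu => by
      have h := ((hg u hu).euclideanSpace_apply 0).add ((hg u hu).euclideanSpace_apply 1)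
      rwa [PiLp.smul_apply, PiLp.smul_apply, smul_eq_mul, smul_eq_mul, ← mul_add,
        toEuclideanLin_apply_zero_add_apply_one, mul_zero] at h) ht
  refine ⟨hsum, fun hinit => ?_⟩
  set c := (WithLp.equiv 2 (Fin 2 → ℝ)).symm ![(1:ℝ)/2, 1/2]
  have hdist (t : ℝ) (ht : 0 ≤ t) : HasDerivWithinAt (fun u => ‖g u - c‖ ^ 2)
      (-4 * l t * ‖g t - c‖ ^ 2) (Ici 0) t := by
    have h := ((hg t ht).sub_const c).norm_sq
    rw [toEuclideanLin_eq_smul_sub_of_add_eq_one ((hsum t ht).trans hinit), smul_smul,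
      real_inner_smul_right, real_inner_self_eq_norm_sq] at h
    convert h using 1
    ring
  have hbound (t : ℝ) (ht : 0 ≤ t) : ‖g t - c‖ ≤ exp (-2 * l₀ * t) * ‖g 0 - c‖ := by
    have hsq := le_exp_mul_of_hasDerivWithinAt_le_mul hdist (k := -4 * l₀)
      (fun u hu => by nlinarith [hl u hu.le, sq_nonneg ‖g u - c‖]) ht
    refine le_of_pow_le_pow_left₀ two_ne_zero (by positivity) (hsq.trans_eq ?_)
    rw [mul_pow, ← exp_nat_mul]
    ring_nf
  exact ⟨hbound, tendsto_of_norm_sub_le_exp_mul (by linarith) hbound⟩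

/-- Let `A = !![-1, 1; 1, -1]`, let `l : [0,∞) → ℝ` be continuous with `l t ≥ l₀ > 0`, and
let `g : [0,∞) → ℝ²` be differentiable with `g' t = l t • (A * g t)` for `t ≥ 0`.  Then the
sum of the components of `g` is conserved, and if the components of `g 0` sum to `1` then
`‖g t - (1/2, 1/2)‖ ≤ e^{-2 l₀ t} ‖g 0 - (1/2, 1/2)‖` for all `t ≥ 0`; in particular
`g t → (1/2, 1/2)` as `t → ∞`. -/
theorem stmt_2 (l₀ : ℝ) (hl₀ : 0 < l₀) (l : ℝ → ℝ)
    (hl_cont : ContinuousOn l (Set.Ici 0)) (hl : ∀ t ≥ (0 : ℝ), l₀ ≤ l t)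
    (g : ℝ → EuclideanSpace ℝ (Fin 2))
    (hg : ∀ t ≥ (0 : ℝ), HasDerivWithinAt g
      (l t • Matrix.toEuclideanLin (!![(-1 : ℝ), 1; 1, -1]) (g t)) (Set.Ici 0) t) :
    (∀ t ≥ (0 : ℝ), g t 0 + g t 1 = g 0 0 + g 0 1) ∧
    (g 0 0 + g 0 1 = 1 →
      (∀ t ≥ (0 : ℝ),
          ‖g t - (WithLp.equiv 2 (Fin 2 → ℝ)).symm ![(1:ℝ)/2, 1/2]‖ ≤
            Real.exp (-2 * l₀ * t) *
              ‖g 0 - (WithLp.equiv 2 (Fin 2 → ℝ)).symm ![(1:ℝ)/2, 1/2]‖) ∧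
      Filter.Tendsto g Filter.atTop
        (nhds ((WithLp.equiv 2 (Fin 2 → ℝ)).symm ![(1:ℝ)/2, 1/2]))) :=
  stmt_2_general l₀ hl₀ l hl g hg
end

section
/- Let A be the 2×2 real matrix with rows (−1, 1) and (1, −1). Let l : [0, ∞) → ℝ be continuous with l(t) ≥ l₀ for all t ≥ 0, where l₀ > 0. Let b : [0, ∞) → ℝ² be differentiable with b′(t) = l(t)·(A b(t)) and with b(0) having nonnegative components summing to 1. Fix t₀ > 0 and let Λ : [t₀, ∞) → ℝ² be differentiable with Λ′(t) = (b(t) − Λ(t))/t for all t ≥ t₀. Then both b(t) and Λ(t) converge to (1/2, 1/2) as t → ∞. -/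
/-!
The difference `b₀ - b₁` solves `d' = -2 l d` with `l ≥ l₀ > 0`, so `(d t · e^{2 l₀ t})²` is
nonincreasing and `d` decays exponentially, while `b₀ + b₁` is conserved; hence `b → (1/2, 1/2)`.
For `Λ`, the equation `Λ' = (b - Λ)/t` says exactly that `(t • (Λ t - c))' = b t - c`, and a
function whose derivative tends to `0` is `o(t)`.
-/

open Filter Topology Set Asymptotics

section NormedSpace

variable {E : Type*} [NormedAddCommGroup E] [NormedSpace ℝ E]

theorem isLittleO_id_of_tendsto_deriv {a : ℝ} {f f' : ℝ → E} (hf : ∀ t ≥ a, HasDerivWithinAt f (f' t) (Ici a) t)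
    (hf' : Tendsto f' atTop (𝓝 0)) : f =o[atTop] id := by
  refine isLittleO_iff.mpr fun c hc => ?_
  obtain ⟨T, hT⟩ := eventually_atTop.mp <|
    ((tendsto_zero_iff_norm_tendsto_zero.mp hf').eventually (gt_mem_nhds (half_pos hc))).and
      (eventually_ge_atTop (max a 0))
  obtain ⟨haT, hT0⟩ := max_le_iff.mp (hT T le_rfl).2
  have hmvt : ∀ t ≥ T, ‖f t - f T‖ ≤ c / 2 * ‖t - T‖ := fun t ht =>
    Convex.norm_image_sub_le_of_norm_hasDerivWithin_le
      (fun x hx => (hf x (haT.trans hx)).mono (Ici_subset_Ici.mpr haT))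
      (fun x hx => (hT x hx).1.le) (convex_Ici T) self_mem_Ici ht
  filter_upwards [eventually_ge_atTop T, eventually_ge_atTop (2 * ‖f T‖ / c)] with t hTt hft
  have hfT : 2 * ‖f T‖ ≤ c * t := (div_le_iff₀' hc).mp hft
  calc ‖f t‖ ≤ ‖f T‖ + ‖f t - f T‖ := norm_le_norm_add_norm_sub' _ _
    _ ≤ ‖f T‖ + c / 2 * ‖t - T‖ := by gcongr; exact hmvt t hTt
    _ ≤ c * ‖id t‖ := by
      rw [Real.norm_of_nonneg (sub_nonneg.mpr hTt), id, Real.norm_of_nonneg (hT0.trans hTt)]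
      nlinarith

theorem tendsto_of_hasDerivWithinAt_one_div_smul_sub {a : ℝ} (ha : 0 < a) {Λ b : ℝ → E} {c : E}
    (hΛ : ∀ t ≥ a, HasDerivWithinAt Λ ((1 / t) • (b t - Λ t)) (Ici a) t)
    (hb : Tendsto b atTop (𝓝 c)) : Tendsto Λ atTop (𝓝 c) := by
  have hderiv : ∀ t ≥ a, HasDerivWithinAt (fun t => t • (Λ t - c)) (b t - c) (Ici a) t := by
    intro t ht
    refine ((hasDerivWithinAt_id t _).smul ((hΛ t ht).sub_const c)).congr_deriv ?_
    rw [smul_smul, id, mul_one_div_cancel (ha.trans_le ht).ne', one_smul, one_smul]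
    abel
  have hsmall := (isLittleO_id_of_tendsto_deriv hderiv
    (tendsto_sub_nhds_zero_iff.mpr hb)).tendsto_inv_smul_nhds_zero
  refine tendsto_sub_nhds_zero_iff.mp (hsmall.congr' ?_)
  filter_upwards [eventually_gt_atTop 0] with t ht
  rw [id, smul_smul, inv_mul_cancel₀ ht.ne', one_smul]

end NormedSpace

theorem tendsto_zero_of_hasDerivWithinAt_neg_mul {a k₀ : ℝ} (hk₀ : 0 < k₀) {k d : ℝ → ℝ}
    (hk : ∀ t ≥ a, k₀ ≤ k t) (hd : ∀ t ≥ a, HasDerivWithinAt d (-(k t * d t)) (Ici a) t) :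
    Tendsto d atTop (𝓝 0) := by
  set w : ℝ → ℝ := fun t => d t * Real.exp (k₀ * t)
  have hw : ∀ t ≥ a, HasDerivWithinAt (fun t => w t ^ 2)
      (-(2 * (k t - k₀) * w t ^ 2)) (Ici a) t := by
    intro t ht
    have hexp : HasDerivAt (fun t => Real.exp (k₀ * t)) (Real.exp (k₀ * t) * k₀) t := by
      simpa using ((hasDerivAt_id t).const_mul k₀).exp
    refine (((hd t ht).mul hexp.hasDerivWithinAt).pow 2).congr_deriv ?_
    simp only [w, Pi.mul_apply]
    push_cast
    ring
  have hanti : AntitoneOn (fun t => w t ^ 2) (Ici a) := by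
    refine antitoneOn_of_hasDerivWithinAt_nonpos (f' := fun t => -(2 * (k t - k₀) * w t ^ 2))
      (convex_Ici a)
      (fun t ht => (hw t ht).continuousWithinAt) (fun t ht => ?_) (fun t ht => ?_)
    · rw [interior_Ici] at ht ⊢
      exact (hw t ht.le).mono Ioi_subset_Ici_self
    · rw [interior_Ici] at ht
      exact neg_nonpos.mpr <|
        mul_nonneg (mul_nonneg zero_le_two (sub_nonneg.mpr (hk t ht.le))) (sq_nonneg _)
  have hbound : ∀ t ≥ a, ‖d t‖ ≤ |w a| * Real.exp (-(k₀ * t)) := by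
    intro t ht
    have hwt : |w t| ≤ |w a| := sq_le_sq.mp (hanti self_mem_Ici ht ht)
    rw [Real.norm_eq_abs, Real.exp_neg, ← div_eq_mul_inv, le_div_iff₀ (Real.exp_pos _)]
    simpa [w, abs_mul] using hwt
  refine squeeze_zero_norm' (eventually_atTop.mpr ⟨a, hbound⟩) ?_
  simpa using (Real.tendsto_exp_atBot.comp
    (tendsto_neg_atTop_atBot.comp (tendsto_id.const_mul_atTop hk₀))).const_mul |w a|

theorem miscoordination_mulVec (v : Fin 2 → ℝ) :
    (!![(-1 : ℝ), 1; 1, -1]).mulVec v = ![v 1 - v 0, v 0 - v 1] := by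
  ext i
  fin_cases i <;> simp [Matrix.mulVec, dotProduct, Fin.sum_univ_two] <;> ring

theorem tendsto_half_of_hasDerivWithinAt_miscoordination {l₀ : ℝ} (hl₀ : 0 < l₀) {l : ℝ → ℝ}
    (hl : ∀ t ≥ (0 : ℝ), l₀ ≤ l t) {b : ℝ → Fin 2 → ℝ}
    (hb : ∀ t ≥ (0 : ℝ), HasDerivWithinAt b
      (l t • (!![(-1 : ℝ), 1; 1, -1]).mulVec (b t)) (Ici 0) t)
    (hb0 : b 0 0 + b 0 1 = 1) :
    Tendsto b atTop (𝓝 ![(1 : ℝ) / 2, 1 / 2]) := by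
  have hcomp : ∀ t ≥ (0 : ℝ), HasDerivWithinAt (fun t => b t 0) (l t * (b t 1 - b t 0)) (Ici 0) t
      ∧ HasDerivWithinAt (fun t => b t 1) (l t * (b t 0 - b t 1)) (Ici 0) t := by
    intro t ht
    have hcoord := hasDerivWithinAt_pi.mp (hb t ht)
    rw [miscoordination_mulVec] at hcoord
    exact ⟨hcoord 0, hcoord 1⟩
  have hsum : ∀ t ≥ (0 : ℝ), b t 0 + b t 1 = 1 := by
    have hderiv : ∀ t ≥ (0 : ℝ), HasDerivWithinAt (fun t => b t 0 + b t 1) 0 (Ici 0) t :=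
      fun t ht => ((hcomp t ht).1.add (hcomp t ht).2).congr_deriv (by ring)
    intro t ht
    rw [← hb0]
    exact constant_of_has_deriv_right_zero
      (fun x hx => (hderiv x hx.1).continuousWithinAt.mono Icc_subset_Ici_self)
      (fun x hx => (hderiv x hx.1).mono (Ici_subset_Ici.mpr hx.1)) t ⟨ht, le_rfl⟩
  have hdiff : Tendsto (fun t => b t 0 - b t 1) atTop (𝓝 0) :=
    tendsto_zero_of_hasDerivWithinAt_neg_mul (mul_pos two_pos hl₀)
      (fun t ht => mul_le_mul_of_nonneg_left (hl t ht) zero_le_two)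
      (fun t ht => ((hcomp t ht).1.sub (hcomp t ht).2).congr_deriv (by ring))
  have hcoords : ∀ᶠ t in atTop,
      (1 + (b t 0 - b t 1)) / 2 = b t 0 ∧ (1 - (b t 0 - b t 1)) / 2 = b t 1 := by
    filter_upwards [eventually_ge_atTop 0] with t ht
    constructor <;> linarith [hsum t ht]
  rw [tendsto_pi_nhds, Fin.forall_fin_two]
  constructor
  · refine Tendsto.congr' (hcoords.mono fun t h => h.1) ?_
    simpa using (hdiff.const_add 1).div_const 2
  · refine Tendsto.congr' (hcoords.mono fun t h => h.2) ?_
    simpa using (hdiff.const_sub 1).div_const 2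

theorem stmt_5_general (l₀ : ℝ) (hl₀ : 0 < l₀) (l : ℝ → ℝ)
    (hl : ∀ t ≥ (0 : ℝ), l₀ ≤ l t)
    (b : ℝ → Fin 2 → ℝ)
    (hb : ∀ t ≥ (0 : ℝ), HasDerivWithinAt b
      (l t • (!![(-1 : ℝ), 1; 1, -1]).mulVec (b t)) (Set.Ici 0) t)
    (hb0_sum : b 0 0 + b 0 1 = 1)
    (t₀ : ℝ) (ht₀ : 0 < t₀) (Λ : ℝ → Fin 2 → ℝ)
    (hΛ : ∀ t ≥ t₀, HasDerivWithinAt Λ ((1 / t) • (b t - Λ t)) (Set.Ici t₀) t) :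
    Filter.Tendsto b Filter.atTop (nhds ![(1:ℝ)/2, 1/2]) ∧
    Filter.Tendsto Λ Filter.atTop (nhds ![(1:ℝ)/2, 1/2]) := by
  have hb_lim := tendsto_half_of_hasDerivWithinAt_miscoordination hl₀ hl hb hb0_sum
  exact ⟨hb_lim, tendsto_of_hasDerivWithinAt_one_div_smul_sub ht₀ hΛ hb_lim⟩

/-- For the 2×2 miscoordination game: with `A = !![-1, 1; 1, -1]`, `l` continuous with
`l t ≥ l₀ > 0`, `b` a differentiable solution of `b' = l t • (A * b)` whose initial value
has nonnegative components summing to `1`, and `Λ` a differentiable solution on `[t₀,∞)`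
(`t₀ > 0`) of `Λ' t = (b t - Λ t)/t`, both `b t` and `Λ t` converge to `(1/2, 1/2)` as
`t → ∞`. -/
theorem stmt_5 (l₀ : ℝ) (hl₀ : 0 < l₀) (l : ℝ → ℝ)
    (hl_cont : ContinuousOn l (Set.Ici 0)) (hl : ∀ t ≥ (0 : ℝ), l₀ ≤ l t)
    (b : ℝ → Fin 2 → ℝ)
    (hb : ∀ t ≥ (0 : ℝ), HasDerivWithinAt b
      (l t • (!![(-1 : ℝ), 1; 1, -1]).mulVec (b t)) (Set.Ici 0) t)
    (hb0_nonneg : ∀ i, 0 ≤ b 0 i) (hb0_sum : b 0 0 + b 0 1 = 1)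
    (t₀ : ℝ) (ht₀ : 0 < t₀) (Λ : ℝ → Fin 2 → ℝ)
    (hΛ : ∀ t ≥ t₀, HasDerivWithinAt Λ ((1 / t) • (b t - Λ t)) (Set.Ici t₀) t) :
    Filter.Tendsto b Filter.atTop (nhds ![(1:ℝ)/2, 1/2]) ∧
    Filter.Tendsto Λ Filter.atTop (nhds ![(1:ℝ)/2, 1/2]) :=
  stmt_5_general l₀ hl₀ l hl b hb hb0_sum t₀ ht₀ Λ hΛ
end

section
/- Let x, y ∈ ℝⁿ have all components strictly positive, and let π(z) := z / ∑_{i=1}^{n} z_i denote the normalization map to the probability simplex. Then ‖π(x) − π(y)‖ ≤ (1 + √n) ‖x − y‖ / ∑_{i=1}^{n} x_i, where ‖·‖ is the Euclidean norm. -/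
/-- For `x, y ∈ ℝⁿ` with strictly positive components and `π z = z / ∑ i z i` the
normalization map to the simplex, `‖π x - π y‖ ≤ (1 + √n) ‖x - y‖ / ∑ i x i` in the
Euclidean norm. -/
theorem stmt_16 {n : ℕ} (x y : EuclideanSpace ℝ (Fin n))
    (hx : ∀ i, 0 < x i) (hy : ∀ i, 0 < y i) :
    ‖(∑ i, x i)⁻¹ • x - (∑ i, y i)⁻¹ • y‖ ≤
      (1 + Real.sqrt n) * ‖x - y‖ / ∑ i, x i := by
  rcases Nat.eq_zero_or_pos n with hn | hn
  · subst hn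
    have : (x : EuclideanSpace ℝ (Fin 0)) = y := Subsingleton.elim _ _
    simp [this]
  haveI : Nonempty (Fin n) := Fin.pos_iff_nonempty.mp hn
  set s := ∑ i, x i with hs_def
  set t := ∑ i, y i with ht_def
  have hs : 0 < s := Finset.sum_pos (fun i _ => hx i) Finset.univ_nonempty
  have ht : 0 < t := Finset.sum_pos (fun i _ => hy i) Finset.univ_nonempty
  -- norm of x - y componentwise
  have hnxy : ‖x - y‖ = Real.sqrt (∑ i, (x i - y i) ^ 2) := by
    rw [EuclideanSpace.norm_eq]
    congr 1; apply Finset.sum_congr rfl; intro i _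
    simp [sq_abs]
  -- |s - t| ≤ √n ‖x - y‖
  have hst : |s - t| ≤ Real.sqrt n * ‖x - y‖ := by
    have h1 : (s - t) ^ 2 ≤ n * ∑ i, (x i - y i) ^ 2 := by
      have := sq_sum_le_card_mul_sum_sq (s := Finset.univ) (f := fun i => x i - y i)
      simpa [Finset.sum_sub_distrib] using this
    have h2 : |s - t| = Real.sqrt ((s - t) ^ 2) := (Real.sqrt_sq_eq_abs _).symm
    rw [h2, hnxy, ← Real.sqrt_mul (by positivity)]
    exact Real.sqrt_le_sqrt h1
  -- ‖y‖ ≤ t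
  have hyt : ‖y‖ ≤ t := by
    rw [EuclideanSpace.norm_eq]
    have h1 : ∑ i, ‖y i‖ ^ 2 ≤ t ^ 2 := by
      have := Finset.sum_sq_le_sq_sum_of_nonneg (s := Finset.univ)
        (f := fun i => y i) (fun i _ => (hy i).le)
      calc ∑ i, ‖y i‖ ^ 2 = ∑ i, (y i) ^ 2 := by
            apply Finset.sum_congr rfl; intro i _; simp [sq_abs]
        _ ≤ t ^ 2 := this
    calc Real.sqrt (∑ i, ‖y i‖ ^ 2) ≤ Real.sqrt (t ^ 2) := Real.sqrt_le_sqrt h1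
      _ = t := by rw [Real.sqrt_sq ht.le]
  -- decomposition
  have hcoef : (t - s)/(s*t) = s⁻¹ - t⁻¹ := by
    field_simp
  have hdec : s⁻¹ • x - t⁻¹ • y = s⁻¹ • (x - y) + ((t - s)/(s*t)) • y := by
    rw [hcoef, smul_sub, sub_smul]
    abel
  rw [hdec]
  have h1 : ‖s⁻¹ • (x - y) + ((t - s)/(s*t)) • y‖ ≤
      s⁻¹ * ‖x - y‖ + |t - s|/(s*t) * ‖y‖ := by
    refine (norm_add_le _ _).trans ?_
    rw [norm_smul, norm_smul, Real.norm_eq_abs, Real.norm_eq_abs,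
      abs_of_pos (inv_pos.mpr hs), abs_div, abs_of_pos (mul_pos hs ht)]
  refine h1.trans ?_
  have h2 : |t - s|/(s*t) * ‖y‖ ≤ Real.sqrt n * ‖x - y‖ / s := by
    calc |t - s|/(s*t) * ‖y‖ ≤ |t - s|/(s*t) * t := by
          gcongr
      _ = |t - s| / s := by field_simp
      _ ≤ Real.sqrt n * ‖x - y‖ / s := by
          gcongr; rw [abs_sub_comm]; exact hst
  calc s⁻¹ * ‖x - y‖ + |t - s|/(s*t) * ‖y‖
      ≤ s⁻¹ * ‖x - y‖ + Real.sqrt n * ‖x - y‖ / s := by gcongr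
    _ = (1 + Real.sqrt n) * ‖x - y‖ / s := by field_simp
end

section
/- Let μ ≥ 0 and let b : [0, ∞) → ℝⁿ be continuous with ∑_{j=1}^{n} b_j(t) = 1 for all t. Let f : ℝⁿ × [0, ∞) → ℝ be continuously differentiable such that for every T > 0 there is a compact set K contained in the open positive orthant {x : x_i > 0 for all i} with f(x, t) = 0 for all x ∉ K and t ∈ [0, T], and such that ∂_t f + div_x ( (b(t) − μx) f ) = 0 for all x and t. Define Λ_i(t) := ∫ (x_i / ∑_j x_j) f(x, t) dx. Then each Λ_i is differentiable with Λ_i′(t) = ∫ (1/∑_j x_j) ( b_i(t) − x_i/∑_j x_j ) f(x, t) dx; in particular Λ′ does not depend on the memory factor μ. -/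
/-!
Differentiate under the integral sign: on `[0, t + 1]` the density is supported in a fixed compact
set `K` and is uniformly Lipschitz in time there, so the time slopes are dominated. Then replace
`∂ₜ f` by `-div ((b - μ x) f)` and integrate by parts against `pᵢ(x) = xᵢ / ∑ⱼ xⱼ`, which is smooth
near `K` because `K` lies in the open positive orthant. What remains is `Dpᵢ(x) (b - μ x) f`.
Since `pᵢ` is homogeneous of degree `0`, Euler's relation `Dpᵢ(x) x = 0` removes the `μ`-term,
leaving `(bᵢ - pᵢ) / ∑ⱼ xⱼ`.
-/

open MeasureTheory Filter Set Topology

section ParametricIntegral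

variable {α E : Type*} [MeasurableSpace α] {μ : Measure α} [NormedAddCommGroup E]
  [NormedSpace ℝ E]

theorem hasDerivWithinAt_integral_of_dominated_of_lip {F : ℝ → α → E} {F' : α → E}
    {s : Set ℝ} {t : ℝ} {bound : α → ℝ}
    (hF_meas : ∀ᶠ τ in 𝓝[s] t, AEStronglyMeasurable (F τ) μ) (hF_int : Integrable (F t) μ)
    (h_lip : ∀ᶠ τ in 𝓝[s] t, ∀ᵐ x ∂μ, ‖F τ x - F t x‖ ≤ bound x * |τ - t|)
    (bound_integrable : Integrable bound μ)
    (h_diff : ∀ᵐ x ∂μ, HasDerivWithinAt (F · x) (F' x) s t) :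
    HasDerivWithinAt (fun τ => ∫ x, F τ x ∂μ) (∫ x, F' x ∂μ) s t := by
  have hl : 𝓝[s \ {t}] t ≤ 𝓝[s] t := nhdsWithin_mono _ sdiff_subset
  have h_int : ∀ᶠ τ in 𝓝[s] t, Integrable (F τ) μ := by
    filter_upwards [hF_meas, h_lip] with τ hτ_meas hτ_lip
    have hdiff : Integrable (fun x => F τ x - F t x) μ :=
      (bound_integrable.mul_const |τ - t|).mono' (hτ_meas.sub hF_int.1) hτ_lip
    exact (hdiff.add hF_int).congr (ae_of_all _ fun x => sub_add_cancel _ _)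
  have h_slope : ∀ᶠ τ in 𝓝[s \ {t}] t,
      ∫ x, slope (F · x) t τ ∂μ = slope (fun τ => ∫ x, F τ x ∂μ) t τ := by
    filter_upwards [hl h_int] with τ hτ
    simp only [slope_def_module, integral_smul, integral_sub hτ hF_int]
  rw [hasDerivWithinAt_iff_tendsto_slope]
  refine (tendsto_integral_filter_of_dominated_convergence bound ?_ ?_ bound_integrable ?_).congr'
    h_slope
  · filter_upwards [hl hF_meas] with τ hτ
    simp only [slope_def_module]
    exact (hτ.sub hF_int.1).const_smul _
  · filter_upwards [hl h_lip, self_mem_nhdsWithin] with τ hτ hτt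
    filter_upwards [hτ] with x hx
    have hpos : 0 < |τ - t| := abs_pos.2 (sub_ne_zero.2 hτt.2)
    rw [slope_def_module, norm_smul, norm_inv, Real.norm_eq_abs]
    calc |τ - t|⁻¹ * ‖F τ x - F t x‖ ≤ |τ - t|⁻¹ * (bound x * |τ - t|) := by gcongr
      _ = bound x := by field_simp
  · filter_upwards [h_diff] with x hx
    exact hasDerivWithinAt_iff_tendsto_slope.1 hx

end ParametricIntegral

theorem ContinuousOn.integrable_of_support_subset {X E : Type*} [TopologicalSpace X]
    [T2Space X] [MeasurableSpace X] [OpensMeasurableSpace X] {μ : Measure X}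
    [IsFiniteMeasureOnCompacts μ] [NormedAddCommGroup E] {K : Set X} {w : X → E}
    (hw : ContinuousOn w K) (hK : IsCompact K) (hsupp : Function.support w ⊆ K) :
    Integrable w μ :=
  (integrableOn_iff_integrable_of_support_subset hsupp).1 (hw.integrableOn_compact hK)

section Density
variable {E : Type*} [NormedAddCommGroup E] [NormedSpace ℝ E] {f : E → ℝ → ℝ}

theorem contDiff_slice_of_contDiffOn
    (hf : ContDiffOn ℝ 1 (fun p : E × ℝ => f p.1 p.2) (univ ×ˢ Ici 0)) {s : ℝ} (hs : 0 ≤ s) :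
    ContDiff ℝ 1 (fun x => f x s) := by
  rw [← contDiffOn_univ]
  exact hf.comp (contDiff_id.prodMk contDiff_const).contDiffOn fun _ _ => ⟨trivial, hs⟩

theorem differentiableWithinAt_slice_of_contDiffOn
    (hf : ContDiffOn ℝ 1 (fun p : E × ℝ => f p.1 p.2) (univ ×ˢ Ici 0)) (x : E) {s : ℝ}
    (hs : 0 ≤ s) : DifferentiableWithinAt ℝ (f x) (Ici 0) s :=
  (hf.differentiableOn one_ne_zero (x, s) ⟨trivial, hs⟩).comp s
    ((differentiableAt_const x).prodMk differentiableAt_id).differentiableWithinAt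
    fun _ hτ => ⟨trivial, hτ⟩

theorem exists_lipschitz_slice_of_contDiffOn
    (hf : ContDiffOn ℝ 1 (fun p : E × ℝ => f p.1 p.2) (univ ×ˢ Ici 0)) {K : Set E}
    (hK : IsCompact K) (T : ℝ) :
    ∃ C : ℝ, ∀ x ∈ K, ∀ s ∈ Icc 0 T, ∀ s' ∈ Icc 0 T, |f x s' - f x s| ≤ C * |s' - s| := by
  obtain ⟨C, hC⟩ := ((hf.locallyLipschitzOn (convex_univ.prod (convex_Ici 0))).mono
    (prod_mono (subset_univ K) Icc_subset_Ici_self)).exists_lipschitzOnWith_of_compact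
    (hK.prod isCompact_Icc)
  refine ⟨C, fun x hx s hs s' hs' => ?_⟩
  simpa [Prod.dist_eq, Real.dist_eq] using hC.dist_le_mul (x, s') ⟨hx, hs'⟩ (x, s) ⟨hx, hs⟩

variable [MeasurableSpace E] [BorelSpace E] {μ : Measure E} [IsFiniteMeasureOnCompacts μ]

theorem hasDerivWithinAt_integral_mul_of_contDiffOn
    (hf : ContDiffOn ℝ 1 (fun p : E × ℝ => f p.1 p.2) (univ ×ˢ Ici 0)) {K : Set E} {T t : ℝ}
    {w : E → ℝ} (hK : IsCompact K) (hf0 : ∀ x ∉ K, ∀ s ∈ Icc 0 T, f x s = 0)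
    (hw : ContinuousOn w K) (ht : t ∈ Ico 0 T) :
    HasDerivWithinAt (fun s => ∫ x, w x * f x s ∂μ)
      (∫ x, w x * derivWithin (f x) (Ici 0) t ∂μ) (Ici 0) t := by
  have hT : ∀ᶠ τ in 𝓝[Ici 0] t, τ ∈ Icc 0 T := by
    filter_upwards [self_mem_nhdsWithin, mem_nhdsWithin_of_mem_nhds (Iio_mem_nhds ht.2)]
      with τ h0 hT using ⟨h0, hT.le⟩
  have h_int : ∀ s ∈ Icc 0 T, Integrable (fun x => w x * f x s) μ := fun s hs =>
    ContinuousOn.integrable_of_support_subset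
      (hw.mul (contDiff_slice_of_contDiffOn hf hs.1).continuous.continuousOn) hK
      fun x hx => by_contra fun hxK => hx (by simp [hf0 x hxK s hs])
  obtain ⟨C, hC⟩ := exists_lipschitz_slice_of_contDiffOn hf hK T
  obtain ⟨M, hM⟩ := hK.exists_bound_of_continuousOn hw
  have htT : t ∈ Icc 0 T := Ico_subset_Icc_self ht
  refine hasDerivWithinAt_integral_of_dominated_of_lip (bound := K.indicator fun _ => M * C)
    ?_ (h_int t htT) ?_ ?_ (ae_of_all _ fun x =>
      (differentiableWithinAt_slice_of_contDiffOn hf x ht.1).hasDerivWithinAt.const_mul (w x))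
  · filter_upwards [hT] with τ hτ using (h_int τ hτ).aestronglyMeasurable
  · filter_upwards [hT] with τ hτ
    refine ae_of_all _ fun x => ?_
    by_cases hx : x ∈ K
    · rw [indicator_of_mem hx, ← mul_sub, norm_mul, mul_assoc, Real.norm_eq_abs (_ - _)]
      exact mul_le_mul (hM x hx) (hC x hx t htT τ hτ) (abs_nonneg _)
        ((norm_nonneg _).trans (hM x hx))
    · simp [hf0 x hx τ hτ, hf0 x hx t htT, hx]
  · exact (integrable_indicator_iff hK.measurableSet).2 (integrableOn_const hK.measure_ne_top)

end Density

section Divergence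
variable {ι : Type*} [Fintype ι] [DecidableEq ι]

noncomputable def divergence (F : (ι → ℝ) → ι → ℝ) (x : ι → ℝ) : ℝ :=
  ∑ k, fderiv ℝ (fun y => F y k) x (Pi.single k 1)

theorem ContinuousLinearMap.sum_apply_single_mul (L : (ι → ℝ) →L[ℝ] ℝ) (v : ι → ℝ) :
    ∑ k, L (Pi.single k 1) * v k = L v := by
  conv_rhs => rw [← Finset.univ_sum_single v, map_sum]
  refine Finset.sum_congr rfl fun k _ => ?_
  rw [mul_comm, ← smul_eq_mul, ← L.map_smul, ← Pi.single_smul', smul_eq_mul, mul_one]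

theorem integral_mul_divergence_eq_neg {U : Set (ι → ℝ)} {p : (ι → ℝ) → ℝ}
    {F : (ι → ℝ) → ι → ℝ} (hU : IsOpen U) (hp : ContDiffOn ℝ 1 p U) (hF : ContDiff ℝ 1 F)
    (hF_supp : HasCompactSupport F) (hFU : tsupport F ⊆ U) :
    ∫ x, p x * divergence F x = -∫ x, fderiv ℝ p x (F x) := by
  have hFk (k : ι) : ContDiff ℝ 1 (fun y => F y k) := contDiff_pi.1 hF k
  have hFk_supp (k : ι) : tsupport (fun y => F y k) ⊆ tsupport F :=
    tsupport_comp_subset (g := fun v : ι → ℝ => v k) rfl F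
  have hp_cont : ContinuousOn p (tsupport F) := hp.continuousOn.mono hFU
  have hp'_cont : ContinuousOn (fderiv ℝ p) (tsupport F) :=
    (hp.continuousOn_fderiv_of_isOpen hU le_rfl).mono hFU
  have hint_left (k : ι) :
      Integrable (fun x => fderiv ℝ p x (Pi.single k 1) * F x k) := by
    refine ContinuousOn.integrable_of_support_subset ?_ hF_supp ?_
    · exact (hp'_cont.clm_apply continuousOn_const).mul (hFk k).continuous.continuousOn
    · exact (Function.support_mul_subset_right _ _).trans ((subset_tsupport _).trans (hFk_supp k))
  have hint_right (k : ι) :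
      Integrable (fun x => p x * fderiv ℝ (fun y => F y k) x (Pi.single k 1)) := by
    refine ContinuousOn.integrable_of_support_subset ?_ hF_supp ?_
    · exact hp_cont.mul
        (((hFk k).continuous_fderiv one_ne_zero).clm_apply continuous_const).continuousOn
    · exact (Function.support_mul_subset_right _ _).trans
        ((subset_tsupport _).trans ((tsupport_fderiv_apply_subset ℝ _).trans (hFk_supp k)))
  have hint (k : ι) : Integrable (fun x => p x * F x k) := by
    refine ContinuousOn.integrable_of_support_subset ?_ hF_supp ?_
    · exact hp_cont.mul (hFk k).continuous.continuousOn
    · exact (Function.support_mul_subset_right _ _).trans ((subset_tsupport _).trans (hFk_supp k))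
  have hp_diff : ∀ x ∈ tsupport F, DifferentiableAt ℝ p x := fun x hx =>
    (hp.differentiableOn one_ne_zero x (hFU hx)).differentiableAt (hU.mem_nhds (hFU hx))
  calc ∫ x, p x * divergence F x
      = ∑ k, ∫ x, p x * fderiv ℝ (fun y => F y k) x (Pi.single k 1) := by
        simp only [divergence, Finset.mul_sum]
        exact integral_finsetSum _ fun k _ => hint_right k
    _ = ∑ k, -∫ x, fderiv ℝ p x (Pi.single k 1) * F x k := by
        refine Finset.sum_congr rfl fun k _ => ?_
        exact integral_mul_fderiv_eq_neg_fderiv_mul_of_integrable (hint_left k) (hint_right k)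
          (hint k) (fun x hx => hp_diff x (hFk_supp k hx))
          (fun x _ => (hFk k).differentiable one_ne_zero x)
    _ = -∫ x, fderiv ℝ p x (F x) := by
        rw [Finset.sum_neg_distrib, ← integral_finsetSum _ fun k _ => hint_left k]
        simp only [ContinuousLinearMap.sum_apply_single_mul]

end Divergence

section Coordinates
variable {ι : Type*} [Fintype ι]

theorem fderiv_coord_div_sum_apply {x : ι → ℝ} (hx : ∑ j, x j ≠ 0) (i : ι) (v : ι → ℝ) :
    fderiv ℝ (fun y : ι → ℝ => y i / ∑ j, y j) x v =
      (v i - x i / (∑ j, x j) * ∑ j, v j) / ∑ j, x j := by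
  have hsum := HasFDerivAt.fun_sum (u := Finset.univ) (A := fun j (y : ι → ℝ) => y j)
    fun j _ => hasFDerivAt_apply (𝕜 := ℝ) j x
  have h := (hasFDerivAt_apply i x).mul ((hasDerivAt_inv hx).comp_hasFDerivAt x hsum)
  simp only [div_eq_mul_inv]
  rw [HasFDerivAt.fderiv (f := fun y : ι → ℝ => y i * (∑ j, y j)⁻¹) h]
  simp only [neg_smul, smul_neg, Function.comp_apply, add_apply, neg_apply, smul_apply,
    sum_apply, ContinuousLinearMap.proj_apply, smul_eq_mul]
  field_simp
  ring

theorem fderiv_coord_div_sum_apply_flux {c x : ι → ℝ} (hc : ∑ j, c j = 1)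
    (hx : ∑ j, x j ≠ 0) (i : ι) (m a : ℝ) :
    fderiv ℝ (fun y : ι → ℝ => y i / ∑ j, y j) x (fun k => (c k - m * x k) * a) =
      1 / (∑ j, x j) * (c i - x i / ∑ j, x j) * a := by
  rw [fderiv_coord_div_sum_apply hx]
  simp only [← Finset.sum_mul, Finset.sum_sub_distrib, ← Finset.mul_sum, hc]
  field_simp
  ring

theorem contDiffOn_coord_div_sum (i : ι) :
    ContDiffOn ℝ 1 (fun y : ι → ℝ => y i / ∑ j, y j) {y | ∑ j, y j ≠ 0} :=
  (contDiff_apply ℝ ℝ i).contDiffOn.div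
    (ContDiff.sum fun j _ => contDiff_apply ℝ ℝ j).contDiffOn fun _ hy => hy

theorem isOpen_setOf_sum_ne_zero : IsOpen {y : ι → ℝ | ∑ j, y j ≠ 0} :=
  isOpen_ne_fun (continuous_finsetSum _ fun j _ => continuous_apply j) continuous_const

end Coordinates

theorem stmt_19_general {n : ℕ} (μ : ℝ) (b : ℝ → Fin n → ℝ)
    (hb_sum : ∀ t ≥ (0 : ℝ), ∑ j, b t j = 1)
    (f : (Fin n → ℝ) → ℝ → ℝ)
    (hf : ContDiffOn ℝ 1 (fun p : (Fin n → ℝ) × ℝ => f p.1 p.2)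
      (Set.univ ×ˢ Set.Ici 0))
    (hsupp : ∀ T > (0 : ℝ), ∃ K : Set (Fin n → ℝ), IsCompact K ∧
      K ⊆ {x : Fin n → ℝ | ∀ i, 0 < x i} ∧
      ∀ x ∉ K, ∀ t ∈ Set.Icc (0 : ℝ) T, f x t = 0)
    (hpde : ∀ x, ∀ t ≥ (0 : ℝ),
      derivWithin (fun s => f x s) (Set.Ici 0) t +
        ∑ i, fderiv ℝ (fun y => (b t i - μ * y i) * f y t) x (Pi.single i 1) = 0) :
    ∀ i, ∀ t ≥ (0 : ℝ),
      HasDerivWithinAt (fun s => ∫ x : Fin n → ℝ, (x i / ∑ j, x j) * f x s)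
        (∫ x : Fin n → ℝ, (1 / ∑ j, x j) * (b t i - x i / ∑ j, x j) * f x t)
        (Set.Ici 0) t := by
  intro i t ht
  obtain ⟨K, hK, hK_pos, hK0⟩ := hsupp (t + 1) (by linarith)
  have htT : t ∈ Icc 0 (t + 1) := ⟨ht, by linarith⟩
  have hS : ∀ x ∈ K, ∑ j, x j ≠ 0 := by
    -- `∑ⱼ bⱼ t = 1` forces `Fin n` to be nonempty
    obtain ⟨j, -, -⟩ := Finset.exists_ne_zero_of_sum_ne_zero (hb_sum t ht ▸ one_ne_zero)
    exact fun x hx => (Finset.sum_pos (fun j _ => hK_pos hx j) ⟨j, Finset.mem_univ j⟩).ne'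
  set F : (Fin n → ℝ) → Fin n → ℝ := fun y k => (b t k - μ * y k) * f y t
  have hF0 : ∀ x ∉ K, F x = 0 := fun x hx => funext fun k => by simp [F, hK0 x hx t htT]
  have hF : ContDiff ℝ 1 F := contDiff_pi.2 fun k =>
    (contDiff_const.sub (contDiff_const.mul (contDiff_apply ℝ ℝ k))).mul
      (contDiff_slice_of_contDiffOn hf ht)
  have hFU : tsupport F ⊆ {y | ∑ j, y j ≠ 0} :=
    (closure_minimal (Function.support_subset_iff'.2 hF0) hK.isClosed).trans hS
  refine (hasDerivWithinAt_integral_mul_of_contDiffOn (μ := volume) hf hK hK0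
    ((contDiffOn_coord_div_sum i).continuousOn.mono hS) ⟨ht, lt_add_one t⟩).congr_deriv ?_
  calc ∫ x, (x i / ∑ j, x j) * derivWithin (f x) (Ici 0) t
      = -∫ x, (x i / ∑ j, x j) * divergence F x := by
        rw [← integral_neg]
        refine integral_congr_ae (ae_of_all _ fun x => ?_)
        dsimp only
        rw [eq_neg_of_add_eq_zero_left (hpde x t ht), mul_neg]
        rfl
    _ = ∫ x, fderiv ℝ (fun y => y i / ∑ j, y j) x (F x) := by
        rw [integral_mul_divergence_eq_neg isOpen_setOf_sum_ne_zero (contDiffOn_coord_div_sum i)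
          hF (HasCompactSupport.intro hK hF0) hFU, neg_neg]
    _ = _ := by
        refine integral_congr_ae (ae_of_all _ fun x => ?_)
        by_cases hx : x ∈ K
        · exact fderiv_coord_div_sum_apply_flux (hb_sum t ht) (hS x hx) i μ (f x t)
        · simp [hF0 x hx, hK0 x hx t htT]

/-- In the PDE model of fictitious play with memory factor `μ ≥ 0` and mean best response
`b(t)` (components summing to `1`), if the density `f` is continuously differentiable,
supported (uniformly on compact time intervals) in a compact subset of the open positive
orthant, and solves `∂_t f + divₓ ((b t - μ x) f) = 0`, then the mean empirical
probabilities `Λ_i t = ∫ (x_i / ∑_j x_j) f (x, t) dx` are differentiable with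
`Λ_i' t = ∫ (1/∑_j x_j) (b_i t - x_i/∑_j x_j) f (x, t) dx`; in particular `Λ'` does not
depend on `μ`. -/
theorem stmt_19 {n : ℕ} (μ : ℝ) (hμ : 0 ≤ μ) (b : ℝ → Fin n → ℝ)
    (hb_cont : ContinuousOn b (Set.Ici 0))
    (hb_sum : ∀ t ≥ (0 : ℝ), ∑ j, b t j = 1)
    (f : (Fin n → ℝ) → ℝ → ℝ)
    (hf : ContDiffOn ℝ 1 (fun p : (Fin n → ℝ) × ℝ => f p.1 p.2)
      (Set.univ ×ˢ Set.Ici 0))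
    (hsupp : ∀ T > (0 : ℝ), ∃ K : Set (Fin n → ℝ), IsCompact K ∧
      K ⊆ {x : Fin n → ℝ | ∀ i, 0 < x i} ∧
      ∀ x ∉ K, ∀ t ∈ Set.Icc (0 : ℝ) T, f x t = 0)
    (hpde : ∀ x, ∀ t ≥ (0 : ℝ),
      derivWithin (fun s => f x s) (Set.Ici 0) t +
        ∑ i, fderiv ℝ (fun y => (b t i - μ * y i) * f y t) x (Pi.single i 1) = 0) :
    ∀ i, ∀ t ≥ (0 : ℝ),
      HasDerivWithinAt (fun s => ∫ x : Fin n → ℝ, (x i / ∑ j, x j) * f x s)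
        (∫ x : Fin n → ℝ, (1 / ∑ j, x j) * (b t i - x i / ∑ j, x j) * f x t)
        (Set.Ici 0) t :=
  stmt_19_general μ b hb_sum f hf hsupp hpde
end
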